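/- The map ℝ² → χ(ℤ²) sending (x, y) to the class of the representation determined by (1,0) ↦ diag(e^{ix}, e^{−ix}) and (0,1) ↦ diag(e^{iy}, e^{−iy}) is continuous and surjective, and it induces a homeomorphism from the quotient of the torus ℝ²/(2πℤ)² by the involution induced by (x, y) ↦ (−x, −y) onto χ(ℤ²); moreover, χ(ℤ²) is homeomorphic to the 2-sphere S². -/

import Mathlib

open Matrix

noncomputable section

/-- `SU(2)`: 2×2 special unitary complex matrices. -/
abbrev SU2 : Type := Matrix.specialUnitaryGroup (Fin 2) ℂ

namespace CS

noncomputable instance : Group SU2 :=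
  { (inferInstance : Monoid SU2) with
    inv := fun A => ⟨star (A : Matrix (Fin 2) (Fin 2) ℂ), by
      rcases Submonoid.mem_inf.mp A.2 with ⟨h1, h2⟩
      refine Submonoid.mem_inf.mpr ⟨Unitary.star_mem h1, ?_⟩
      have hdet : (star (A : Matrix (Fin 2) (Fin 2) ℂ)).det = star ((A : Matrix (Fin 2) (Fin 2) ℂ).det) := by
        simp [Matrix.star_eq_conjTranspose, Matrix.det_conjTranspose]
      have h2' : (A : Matrix (Fin 2) (Fin 2) ℂ).det = 1 := h2
      have : (star (A : Matrix (Fin 2) (Fin 2) ℂ)).det = 1 := by rw [hdet, h2', star_one]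
      simpa only [MonoidHom.mem_mker, ← Matrix.coe_detMonoidHom] using this⟩
    inv_mul_cancel := fun A => Subtype.ext (Submonoid.mem_inf.mp A.2).1.1 }

/-- The topology of pointwise convergence on the space of representations. -/
instance repTop (G : Type*) [Group G] : TopologicalSpace (G →* SU2) :=
  TopologicalSpace.induced (fun ρ => (ρ : G → SU2)) inferInstance

/-- Conjugation equivalence of representations. -/
def conjSetoid (G : Type*) [Group G] : Setoid (G →* SU2) where
  r ρ σ := ∃ u : SU2, ∀ g, σ g = u * ρ g * u⁻¹
  iseqv := by
    refine ⟨fun ρ => ⟨1, by simp⟩, ?_, ?_⟩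
    · rintro ρ σ ⟨u, h⟩
      exact ⟨u⁻¹, fun g => by rw [h g]; group⟩
    · rintro ρ σ τ ⟨u, h⟩ ⟨v, h'⟩
      exact ⟨v * u, fun g => by rw [h' g, h g]; group⟩

/-- The `SU(2)` character variety of a group `G`. -/
abbrev CharVar (G : Type*) [Group G] : Type _ := Quotient (conjSetoid G)

/-- The conjugacy class of a representation. -/
abbrev charCl {G : Type*} [Group G] (ρ : G →* SU2) : CharVar G :=
  Quotient.mk (conjSetoid G) ρ

/-- A representation is abelian if its image is abelian. -/
def IsAbelianRep {G : Type*} [Group G] (ρ : G →* SU2) : Prop :=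
  ∀ g h : G, Commute (ρ g) (ρ h)

/-- A representation is irreducible if its image is a non-abelian subgroup of `SU(2)`. -/
def IsIrrep {G : Type*} [Group G] (ρ : G →* SU2) : Prop :=
  ¬ IsAbelianRep ρ

/-- The irreducible part `χ*(G)` of the character variety. -/
abbrev CharVarIrr (G : Type*) [Group G] : Type _ :=
  {c : CharVar G // ∃ ρ : G →* SU2, IsIrrep ρ ∧ c = charCl ρ}

end CS
namespace CS

/-- `su(2)`: trace-zero skew-adjoint 2×2 complex matrices, as a real vector space. -/
def su2 : Submodule ℝ (Matrix (Fin 2) (Fin 2) ℂ) where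
  carrier := {A | Aᴴ = -A ∧ A.trace = 0}
  add_mem' := by
    rintro A B ⟨hA1, hA2⟩ ⟨hB1, hB2⟩
    refine ⟨?_, ?_⟩
    · rw [Matrix.conjTranspose_add, hA1, hB1, neg_add]
    · rw [Matrix.trace_add, hA2, hB2, add_zero]
  zero_mem' := by
    constructor <;> simp
  smul_mem' := by
    rintro c A ⟨hA1, hA2⟩
    refine ⟨?_, ?_⟩
    · rw [Matrix.conjTranspose_smul, hA1, smul_neg, star_trivial]
    · rw [Matrix.trace_smul, hA2, smul_zero]

variable {G : Type*} [Group G]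

/-- The adjoint action of a representation on 2×2 matrices: `g · v = ρ(g) v ρ(g)⁻¹`. -/
def adAct (ρ : G →* SU2) (g : G) (A : Matrix (Fin 2) (Fin 2) ℂ) : Matrix (Fin 2) (Fin 2) ℂ :=
  (ρ g : Matrix (Fin 2) (Fin 2) ℂ) * A * ((ρ g⁻¹ : SU2) : Matrix (Fin 2) (Fin 2) ℂ)

lemma adAct_add (ρ : G →* SU2) (g : G) (A B : Matrix (Fin 2) (Fin 2) ℂ) :
    adAct ρ g (A + B) = adAct ρ g A + adAct ρ g B := by
  simp [adAct, Matrix.add_mul, Matrix.mul_add]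

lemma adAct_smul (ρ : G →* SU2) (g : G) (c : ℝ) (A : Matrix (Fin 2) (Fin 2) ℂ) :
    adAct ρ g (c • A) = c • adAct ρ g A := by
  simp [adAct, Matrix.smul_mul, Matrix.mul_smul]

/-- The space of 1-cocycles of `G` with coefficients in `su(2)` twisted by `ad ρ`. -/
def oneCocyclesAd (ρ : G →* SU2) : Submodule ℝ (G → Matrix (Fin 2) (Fin 2) ℂ) where
  carrier := {f | (∀ g, f g ∈ su2) ∧ ∀ g h, f (g * h) = f g + adAct ρ g (f h)}
  add_mem' := by
    rintro f f' ⟨hf1, hf2⟩ ⟨hf'1, hf'2⟩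
    refine ⟨fun g => su2.add_mem (hf1 g) (hf'1 g), fun g h => ?_⟩
    simp only [Pi.add_apply, hf2 g h, hf'2 g h, adAct_add]
    abel
  zero_mem' := by
    refine ⟨fun g => su2.zero_mem, fun g h => ?_⟩
    simp [adAct]
  smul_mem' := by
    rintro c f ⟨hf1, hf2⟩
    refine ⟨fun g => su2.smul_mem c (hf1 g), fun g h => ?_⟩
    simp only [Pi.smul_apply, hf2 g h, adAct_smul, smul_add]

/-- The space of 1-coboundaries of `G` with coefficients in `su(2)` twisted by `ad ρ`. -/
def oneCoboundariesAd (ρ : G →* SU2) : Submodule ℝ (G → Matrix (Fin 2) (Fin 2) ℂ) where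
  carrier := {f | ∃ A ∈ su2, ∀ g, f g = adAct ρ g A - A}
  add_mem' := by
    rintro f f' ⟨A, hA, hf⟩ ⟨B, hB, hf'⟩
    refine ⟨A + B, su2.add_mem hA hB, fun g => ?_⟩
    simp only [Pi.add_apply, hf g, hf' g, adAct_add]
    abel
  zero_mem' := ⟨0, su2.zero_mem, fun g => by simp [adAct]⟩
  smul_mem' := by
    rintro c f ⟨A, hA, hf⟩
    refine ⟨c • A, su2.smul_mem c hA, fun g => ?_⟩
    simp only [Pi.smul_apply, hf g, adAct_smul, smul_sub]

/-- First group cohomology `H¹(G; su(2)_{ad ρ})`, as a real vector space. -/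
def H1Ad (ρ : G →* SU2) : Type _ :=
  ↥(oneCocyclesAd ρ) ⧸ ((oneCoboundariesAd ρ).comap (oneCocyclesAd ρ).subtype)

noncomputable instance (ρ : G →* SU2) : AddCommGroup (H1Ad ρ) :=
  inferInstanceAs (AddCommGroup (↥(oneCocyclesAd ρ) ⧸ ((oneCoboundariesAd ρ).comap (oneCocyclesAd ρ).subtype)))

noncomputable instance (ρ : G →* SU2) : Module ℝ (H1Ad ρ) :=
  inferInstanceAs (Module ℝ (↥(oneCocyclesAd ρ) ⧸ ((oneCoboundariesAd ρ).comap (oneCocyclesAd ρ).subtype)))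

/-- The dimension (rank) of `H¹(G; su(2)_{ad ρ})` over `ℝ`. -/
noncomputable def h1dim (ρ : G →* SU2) : Cardinal := Module.rank ℝ (H1Ad ρ)

end CS
namespace CS

/-- The relator set of the torus knot group `⟨x, y | xᵖ = y^q⟩`. -/
def tkRel (p q : ℤ) : Set (FreeGroup (Fin 2)) :=
  {FreeGroup.of 0 ^ p * FreeGroup.of 1 ^ (-q)}

/-- The `(p,q)` torus knot group `G_{p,q} = ⟨x, y | xᵖ y^{-q}⟩`. -/
abbrev TK (p q : ℤ) : Type := PresentedGroup (tkRel p q)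

/-- The generator `x` of `G_{p,q}`. -/
def tkx (p q : ℤ) : TK p q := PresentedGroup.of 0

/-- The generator `y` of `G_{p,q}`. -/
def tky (p q : ℤ) : TK p q := PresentedGroup.of 1

/-- The meridian `μ = xᵃ yᵇ` of `G_{p,q}`. -/
def tkMu (p q a b : ℤ) : TK p q := tkx p q ^ a * tky p q ^ b

/-- The longitude `λ = xᵖ μ^{-pq}` of `G_{p,q}`. -/
def tkLam (p q a b : ℤ) : TK p q := tkx p q ^ p * tkMu p q a b ^ (-(p * q))

lemma tk_rel_holds (p q : ℤ) : tkx p q ^ p = tky p q ^ q := by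
  have hmem : FreeGroup.of (0 : Fin 2) ^ p * FreeGroup.of (1 : Fin 2) ^ (-q) ∈
      Subgroup.normalClosure (tkRel p q) :=
    Subgroup.subset_normalClosure rfl
  have h1 : PresentedGroup.mk (tkRel p q) (FreeGroup.of 0 ^ p * FreeGroup.of 1 ^ (-q)) = 1 :=
    (QuotientGroup.eq_one_iff _).mpr hmem
  have h2 : tkx p q ^ p * tky p q ^ (-q) = 1 := by
    have := h1
    rw [_root_.map_mul, map_zpow, map_zpow] at this
    exact this
  rw [_root_.zpow_neg] at h2
  exact (mul_inv_eq_one.mp h2)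

lemma tk_xp_central (p q : ℤ) (w : TK p q) : Commute (tkx p q ^ p) w := by
  have hw : w ∈ Subgroup.closure (Set.range (PresentedGroup.of : Fin 2 → TK p q)) := by
    rw [PresentedGroup.closure_range_of]; trivial
  induction hw using Subgroup.closure_induction with
  | mem z hz =>
      obtain ⟨i, rfl⟩ := hz
      fin_cases i
      · exact (Commute.refl (tkx p q)).zpow_left p
      · rw [tk_rel_holds p q]
        exact (Commute.refl (tky p q)).zpow_left q
  | one => exact Commute.one_right _
  | mul a b _ _ ha hb => exact ha.mul_right hb
  | inv a _ ha => exact ha.inv_right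

lemma tk_mu_lam_comm (p q a b : ℤ) : Commute (tkMu p q a b) (tkLam p q a b) := by
  unfold tkLam
  exact (tk_xp_central p q (tkMu p q a b)).symm.mul_right
    ((Commute.refl (tkMu p q a b)).zpow_right (-(p * q)))

end CS
namespace CS

/-- The free abelian group of rank 2, written multiplicatively. -/
abbrev Z2 : Type := Multiplicative (ℤ × ℤ)

/-- The homomorphism `ℤ² → G` sending the generators to a pair of commuting elements. -/
def zsqHom {G : Type*} [Group G] (u v : G) (huv : Commute u v) : Z2 →* G where
  toFun z := u ^ (Multiplicative.toAdd z).1 * v ^ (Multiplicative.toAdd z).2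
  map_one' := by simp
  map_mul' z w := by
    have h := (huv.zpow_zpow (Multiplicative.toAdd w).1 (Multiplicative.toAdd z).2).eq
    simp only [toAdd_mul, Prod.fst_add, Prod.snd_add, _root_.zpow_add]
    calc u ^ (Multiplicative.toAdd z).1 * u ^ (Multiplicative.toAdd w).1 *
          (v ^ (Multiplicative.toAdd z).2 * v ^ (Multiplicative.toAdd w).2)
        = u ^ (Multiplicative.toAdd z).1 *
            (u ^ (Multiplicative.toAdd w).1 * v ^ (Multiplicative.toAdd z).2) *
            v ^ (Multiplicative.toAdd w).2 := by group
      _ = u ^ (Multiplicative.toAdd z).1 *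
            (v ^ (Multiplicative.toAdd z).2 * u ^ (Multiplicative.toAdd w).1) *
            v ^ (Multiplicative.toAdd w).2 := by rw [h]
      _ = u ^ (Multiplicative.toAdd z).1 * v ^ (Multiplicative.toAdd z).2 *
            (u ^ (Multiplicative.toAdd w).1 * v ^ (Multiplicative.toAdd w).2) := by group

section Amalg

variable {A G H : Type*} [Group A] [Group G] [Group H]

/-- The normal subgroup of the free product generated by the amalgamation relations. -/
def amalgRel (φ : A →* G) (ψ : A →* H) : Subgroup (Monoid.Coprod G H) :=
  Subgroup.normalClosure (Set.range fun a => Monoid.Coprod.inl (φ a) * (Monoid.Coprod.inr (ψ a))⁻¹)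

instance amalgRel_normal (φ : A →* G) (ψ : A →* H) : (amalgRel φ ψ).Normal :=
  Subgroup.normalClosure_normal

/-- The pushout (amalgamated free product) of `φ : A → G` and `ψ : A → H`. -/
abbrev Amalg (φ : A →* G) (ψ : A →* H) : Type _ :=
  Monoid.Coprod G H ⧸ amalgRel φ ψ

/-- The canonical map `G → G *_A H`. -/
def Amalg.inl (φ : A →* G) (ψ : A →* H) : G →* Amalg φ ψ :=
  (QuotientGroup.mk' (amalgRel φ ψ)).comp Monoid.Coprod.inl

/-- The canonical map `H → G *_A H`. -/
def Amalg.inr (φ : A →* G) (ψ : A →* H) : H →* Amalg φ ψ :=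
  (QuotientGroup.mk' (amalgRel φ ψ)).comp Monoid.Coprod.inr

lemma amalg_comm (φ : A →* G) (ψ : A →* H) (a : A) :
    Amalg.inl φ ψ (φ a) = Amalg.inr φ ψ (ψ a) := by
  have hgen : Monoid.Coprod.inl (φ a) * (Monoid.Coprod.inr (ψ a))⁻¹ ∈ amalgRel φ ψ :=
    Subgroup.subset_normalClosure ⟨a, rfl⟩
  have hinv : (Monoid.Coprod.inr (ψ a) : Monoid.Coprod G H) * (Monoid.Coprod.inl (φ a))⁻¹ ∈
      amalgRel φ ψ := by
    have := (amalgRel φ ψ).inv_mem hgen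
    simpa [_root_.mul_inv_rev] using this
  have hkey : ((Monoid.Coprod.inl (φ a) : Monoid.Coprod G H))⁻¹ * Monoid.Coprod.inr (ψ a) ∈
      amalgRel φ ψ := (amalgRel_normal φ ψ).mem_comm hinv
  exact (QuotientGroup.eq (s := amalgRel φ ψ)).mpr hkey

end Amalg

/-! Specific meridians and longitudes. -/

/-- Meridian of `T(3,5)`. -/
def mu35 : TK 3 5 := tkMu 3 5 2 (-3)
/-- Longitude of `T(3,5)`. -/
def lam35 : TK 3 5 := tkLam 3 5 2 (-3)
/-- Meridian of `T(2,7)`. -/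
def mu27 : TK 2 7 := tkMu 2 7 1 (-3)
/-- Longitude of `T(2,7)`. -/
def lam27 : TK 2 7 := tkLam 2 7 1 (-3)
/-- Meridian of `T(-2,7)`. -/
def muN27 : TK (-2) 7 := tkMu (-2) 7 1 3
/-- Longitude of `T(-2,7)`. -/
def lamN27 : TK (-2) 7 := tkLam (-2) 7 1 3

/-- `φ_X : ℤ² → G_{3,5}`, `(m,n) ↦ μ_X^m λ_X^n`. -/
def phiX : Z2 →* TK 3 5 := zsqHom mu35 lam35 (tk_mu_lam_comm 3 5 2 (-3))

lemma mu_mulLam_comm {Γ : Type*} [Group Γ] {μ ℓ : Γ} (h : Commute μ ℓ) :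
    Commute μ ((μ * ℓ)⁻¹) :=
  ((Commute.refl μ).mul_right h).inv_right

/-- `φ_Y : ℤ² → G_{2,7}`, `(m,n) ↦ μ_Y^m (μ_Y λ_Y)^{-n}`. -/
def phiY : Z2 →* TK 2 7 :=
  zsqHom mu27 ((mu27 * lam27)⁻¹) (mu_mulLam_comm (tk_mu_lam_comm 2 7 1 (-3)))

/-- `π₁(Σ₁)`, the pushout of `φ_X` and `φ_Y`. -/
abbrev Pi1Sigma1 : Type _ := Amalg phiX phiY

/-- `π₁(Z)`, the group of the complement of `T(-2,7) # T(-2,7)`: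
the pushout of the two meridian inclusions `ℤ → G_{-2,7}`. -/
abbrev Pi1Z : Type _ :=
  Amalg (zpowersHom (TK (-2) 7) muN27) (zpowersHom (TK (-2) 7) muN27)

/-- The meridian of `Z`. -/
def muZ : Pi1Z := Amalg.inl _ _ muN27

/-- The longitude of `Z`: the product of the images of the two longitudes. -/
def lamZ : Pi1Z := Amalg.inl _ _ lamN27 * Amalg.inr _ _ lamN27

lemma muZ_eq_inr : muZ = Amalg.inr (zpowersHom (TK (-2) 7) muN27) (zpowersHom (TK (-2) 7) muN27) muN27 := by
  have := amalg_comm (zpowersHom (TK (-2) 7) muN27) (zpowersHom (TK (-2) 7) muN27)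
    (Multiplicative.ofAdd 1)
  simpa [muZ] using this

lemma muZ_lamZ_comm : Commute muZ lamZ := by
  have h1 : Commute muZ (Amalg.inl (zpowersHom (TK (-2) 7) muN27) (zpowersHom (TK (-2) 7) muN27) lamN27) :=
    (tk_mu_lam_comm (-2) 7 1 3).map _
  have h2 : Commute muZ (Amalg.inr (zpowersHom (TK (-2) 7) muN27) (zpowersHom (TK (-2) 7) muN27) lamN27) := by
    rw [muZ_eq_inr]
    exact (tk_mu_lam_comm (-2) 7 1 3).map _
  exact h1.mul_right h2

/-- `ψ_X : ℤ² → G_{3,5}` (same formula as `φ_X`). -/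
def psiX : Z2 →* TK 3 5 := phiX

/-- `ψ_Z : ℤ² → π₁(Z)`, `(m,n) ↦ μ_Z^m (μ_Z λ_Z)^{-n}`. -/
def psiZ : Z2 →* Pi1Z := zsqHom muZ ((muZ * lamZ)⁻¹) (mu_mulLam_comm muZ_lamZ_comm)

/-- `π₁(Σ₂)`, the pushout of `ψ_X` and `ψ_Z`. -/
abbrev Pi1Sigma2 : Type _ := Amalg psiX psiZ

end CS
namespace CS

/-- The diagonal matrix `diag(e^{it}, e^{-it})`. -/
def diagU (t : ℝ) : Matrix (Fin 2) (Fin 2) ℂ :=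
  Matrix.diagonal ![Complex.exp ((t : ℂ) * Complex.I), Complex.exp (-(t : ℂ) * Complex.I)]

lemma star_exp_I (s : ℝ) :
    star (Complex.exp ((s : ℂ) * Complex.I)) = Complex.exp (-(s : ℂ) * Complex.I) :=
  calc star (Complex.exp ((s : ℂ) * Complex.I))
      = (starRingEnd ℂ) (Complex.exp ((s : ℂ) * Complex.I)) := rfl
    _ = Complex.exp ((starRingEnd ℂ) ((s : ℂ) * Complex.I)) := (Complex.exp_conj _).symm
    _ = Complex.exp (-(s : ℂ) * Complex.I) := by
        rw [_root_.map_mul, Complex.conj_I, Complex.conj_ofReal, mul_neg, ← neg_mul]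

lemma exp_I_mul_exp_neg_I (s : ℝ) :
    Complex.exp ((s : ℂ) * Complex.I) * Complex.exp (-(s : ℂ) * Complex.I) = 1 := by
  rw [← Complex.exp_add, show (s : ℂ) * Complex.I + -(s : ℂ) * Complex.I = 0 by ring,
    Complex.exp_zero]

lemma diagU_mul (s u : ℝ) : diagU s * diagU u = diagU (s + u) := by
  unfold diagU
  rw [Matrix.diagonal_mul_diagonal, Matrix.diagonal_eq_diagonal_iff]
  intro i
  fin_cases i
  · show Complex.exp _ * Complex.exp _ = Complex.exp _
    rw [← Complex.exp_add]; congr 1; push_cast; ring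
  · show Complex.exp _ * Complex.exp _ = Complex.exp _
    rw [← Complex.exp_add]; congr 1; push_cast; ring

lemma diagU_zero : diagU 0 = 1 := by
  unfold diagU
  rw [show (![Complex.exp (((0:ℝ) : ℂ) * Complex.I), Complex.exp (-((0:ℝ) : ℂ) * Complex.I)] :
      Fin 2 → ℂ) = fun _ => 1 by funext i; fin_cases i <;> simp]
  exact Matrix.diagonal_one

lemma star_diagU (t : ℝ) : star (diagU t) = diagU (-t) := by
  unfold diagU
  rw [Matrix.star_eq_conjTranspose, Matrix.diagonal_conjTranspose,
    Matrix.diagonal_eq_diagonal_iff]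
  intro i
  fin_cases i
  · show star (Complex.exp ((t : ℂ) * Complex.I)) = Complex.exp (((-t : ℝ) : ℂ) * Complex.I)
    rw [star_exp_I t]; push_cast; ring_nf
  · show star (Complex.exp (-(t : ℂ) * Complex.I)) = Complex.exp (-((-t : ℝ) : ℂ) * Complex.I)
    rw [show -(t : ℂ) * Complex.I = ((-t : ℝ) : ℂ) * Complex.I by push_cast; ring,
      star_exp_I (-t)]

lemma diagU_mem (t : ℝ) : diagU t ∈ Matrix.specialUnitaryGroup (Fin 2) ℂ := by
  refine Submonoid.mem_inf.mpr ⟨⟨?_, ?_⟩, ?_⟩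
  · rw [star_diagU, diagU_mul, neg_add_cancel, diagU_zero]
  · rw [star_diagU, diagU_mul, add_neg_cancel, diagU_zero]
  · have : (diagU t).det = 1 := by
      unfold diagU
      rw [Matrix.det_diagonal, Fin.prod_univ_two]
      simpa using exp_I_mul_exp_neg_I t
    simpa only [MonoidHom.mem_mker, ← Matrix.coe_detMonoidHom] using this

/-- The element `diag(e^{it}, e^{-it})` of `SU(2)`. -/
def diagSU (t : ℝ) : SU2 := ⟨diagU t, diagU_mem t⟩

lemma diagSU_comm (s t : ℝ) : Commute (diagSU s) (diagSU t) := by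
  apply Subtype.ext
  show diagU s * diagU t = diagU t * diagU s
  rw [diagU_mul, diagU_mul, add_comm]

end CS
namespace CS

/-- The setoid on `A × [0,1)` collapsing `A × {0}` to a point. -/
def coneSetoid (A : Type*) : Setoid (A × (Set.Ico (0:ℝ) 1)) where
  r p q := p = q ∨ (((p.2 : ℝ) = 0) ∧ ((q.2 : ℝ) = 0))
  iseqv := by
    constructor
    · intro p; exact Or.inl rfl
    · rintro p q (rfl | ⟨h1, h2⟩)
      · exact Or.inl rfl
      · exact Or.inr ⟨h2, h1⟩
    · rintro p q r (rfl | ⟨h1, h2⟩) h'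
      · exact h'
      · rcases h' with rfl | ⟨h3, h4⟩
        · exact Or.inr ⟨h1, h2⟩
        · exact Or.inr ⟨h1, h4⟩

/-- The open cone on a space `A`: `(A × [0,1)) / (A × {0})`. -/
abbrev OpenCone (A : Type*) [TopologicalSpace A] : Type _ := Quotient (coneSetoid A)

/-- The setoid on `X ⊕ Y` identifying the two base points `x₀` and `y₀`. -/
def wedgeSetoid (X Y : Type*) (x0 : X) (y0 : Y) : Setoid (X ⊕ Y) where
  r p q := p = q ∨ ((p = Sum.inl x0 ∨ p = Sum.inr y0) ∧ (q = Sum.inl x0 ∨ q = Sum.inr y0))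
  iseqv := by
    constructor
    · intro p; exact Or.inl rfl
    · rintro p q (rfl | ⟨h1, h2⟩)
      · exact Or.inl rfl
      · exact Or.inr ⟨h2, h1⟩
    · rintro p q r (rfl | ⟨h1, h2⟩) h'
      · exact h'
      · rcases h' with rfl | ⟨h3, h4⟩
        · exact Or.inr ⟨h1, h2⟩
        · exact Or.inr ⟨h1, h4⟩

/-- The one-point union (wedge) of `X` and `Y` at the base points `x₀`, `y₀`. -/
abbrev Wedge (X Y : Type*) [TopologicalSpace X] [TopologicalSpace Y] (x0 : X) (y0 : Y) :
    Type _ := Quotient (wedgeSetoid X Y x0 y0)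

/-- The 2-sphere. -/
abbrev Sphere2 : Type _ := Metric.sphere (0 : EuclideanSpace ℝ (Fin 3)) 1

/-- The 3-torus. -/
abbrev Torus3 : Type _ := Circle × Circle × Circle

end CS

namespace CS

/-- The representation `ℤ² → SU(2)` with `(1,0) ↦ diag(e^{ix}, e^{-ix})`,
`(0,1) ↦ diag(e^{iy}, e^{-iy})`. -/
def pillRep (p : ℝ × ℝ) : Z2 →* SU2 :=
  zsqHom (diagSU p.1) (diagSU p.2) (diagSU_comm p.1 p.2)

/-- The orbit equivalence relation on `ℝ²` of the group generated by the translation lattice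
`(2πℤ)²` and the involution `(x,y) ↦ (-x,-y)`; the quotient is the quotient of the torus
`ℝ²/(2πℤ)²` by the induced involution. -/
def pillowSetoid : Setoid (ℝ × ℝ) where
  r p q := ∃ m n : ℤ,
    (q.1 = p.1 + 2 * Real.pi * m ∧ q.2 = p.2 + 2 * Real.pi * n) ∨
    (q.1 = -p.1 + 2 * Real.pi * m ∧ q.2 = -p.2 + 2 * Real.pi * n)
  iseqv := by
    constructor
    · intro p
      exact ⟨0, 0, Or.inl ⟨by norm_num, by norm_num⟩⟩
    · rintro p q ⟨m, n, (⟨h1, h2⟩ | ⟨h1, h2⟩)⟩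
      · exact ⟨-m, -n, Or.inl ⟨by push_cast; linarith, by push_cast; linarith⟩⟩
      · exact ⟨m, n, Or.inr ⟨by linarith, by linarith⟩⟩
    · rintro p q s ⟨m, n, (⟨h1, h2⟩ | ⟨h1, h2⟩)⟩ ⟨m', n', (⟨h1', h2'⟩ | ⟨h1', h2'⟩)⟩
      · exact ⟨m + m', n + n', Or.inl ⟨by push_cast; linarith, by push_cast; linarith⟩⟩
      · exact ⟨m' - m, n' - n, Or.inr ⟨by push_cast; linarith, by push_cast; linarith⟩⟩
      · exact ⟨m + m', n + n', Or.inr ⟨by push_cast; linarith, by push_cast; linarith⟩⟩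
      · exact ⟨m' - m, n' - n, Or.inl ⟨by push_cast; linarith, by push_cast; linarith⟩⟩

end CS

/-!
Commuting elements of `SU(2)` have a common eigenvector, so every representation of `ℤ²` is
conjugate to a diagonal one, `pillRep (x, y)`. The traces of the images of `(1,0)`, `(0,1)`, `(1,1)`
are `2 cos x`, `2 cos y`, `2 cos (x + y)`; these determine `(x, y)` up to `(2πℤ)²` and the sign
flip, which the Weyl element realises by conjugation. Hence `χ(ℤ²)` is a continuous bijective image
of the compact pillowcase, and it is Hausdorff because traces separate its points.

For the sphere, `(x, y) ↦ (cos x, cos y, sin x sin y)` identifies the pillowcase with a surface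
that every open ray from the origin meets exactly once (existence by the intermediate value
theorem), so radial projection maps it homeomorphically onto `S²`.
-/

theorem Matrix.exists_common_eigenvector {K n : Type*} [Field K] [IsAlgClosed K] [Fintype n]
    [DecidableEq n] [Nonempty n] {A B : Matrix n n K} (h : Commute A B) :
    ∃ v : n → K, v ≠ 0 ∧ ∃ a b : K, A *ᵥ v = a • v ∧ B *ᵥ v = b • v := by
  obtain ⟨a, ha⟩ := Module.End.exists_eigenvalue (Matrix.toLinAlgEquiv' A)
  have hBE : Set.MapsTo (Matrix.toLinAlgEquiv' B)
      (Module.End.eigenspace (Matrix.toLinAlgEquiv' A) a)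
      (Module.End.eigenspace (Matrix.toLinAlgEquiv' A) a) :=
    Module.End.mapsTo_genEigenspace_of_comm (h.map Matrix.toLinAlgEquiv') a 1
  have : Nontrivial (Module.End.eigenspace (Matrix.toLinAlgEquiv' A) a) :=
    Submodule.nontrivial_iff_ne_bot.mpr ha
  obtain ⟨b, hb⟩ := Module.End.exists_eigenvalue ((Matrix.toLinAlgEquiv' B).restrict hBE)
  obtain ⟨⟨v, hvE⟩, hv⟩ := hb.exists_hasEigenvector
  refine ⟨v, fun h0 => hv.2 (Subtype.ext h0), a, b, ?_, ?_⟩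
  · simpa using Module.End.mem_eigenspace_iff.mp hvE
  · exact congrArg Subtype.val hv.apply_eq_smul

theorem Matrix.mul_mul_apply_eq_zero_of_mulVec_eq_smul {R n : Type*} [CommSemiring R] [Fintype n]
    [DecidableEq n] {V W M : Matrix n n R} (hVW : V * W = 1) {j : n} {a : R}
    (h : M *ᵥ (fun k => W k j) = a • fun k => W k j) {i : n} (hij : i ≠ j) :
    (V * M * W) i j = 0 :=
  calc (V * M * W) i j = (V *ᵥ (M *ᵥ fun k => W k j)) i := by rw [Matrix.mul_assoc]; rfl
    _ = a * (V * W) i j := by rw [h, Matrix.mulVec_smul]; rfl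
    _ = 0 := by rw [hVW, Matrix.one_apply_ne hij, mul_zero]

theorem exists_homeomorph_quotient_of_ker {X Y : Type*} [TopologicalSpace X] [TopologicalSpace Y]
    {s : Setoid X} [CompactSpace (Quotient s)] [T2Space Y] {f : X → Y} (hf : Continuous f)
    (hsurj : Function.Surjective f) (hker : ∀ x x', f x = f x' ↔ s.r x x') :
    ∃ e : Quotient s ≃ₜ Y, ∀ x, e (Quotient.mk s x) = f x := by
  let g : Quotient s → Y := Quotient.lift f fun x x' h => (hker x x').mpr h
  have hg : Function.Bijective g :=
    ⟨by rintro ⟨x⟩ ⟨x'⟩ h; exact Quotient.sound ((hker x x').mp h),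
      fun y => (hsurj y).elim fun x hx => ⟨Quotient.mk s x, hx⟩⟩
  exact ⟨(show Continuous (Equiv.ofBijective g hg) from hf.quotient_lift _).homeoOfEquivCompactToT2,
    fun _ => rfl⟩

namespace CS

open Real

local notation "M2" => Matrix (Fin 2) (Fin 2) ℂ

namespace SU2

lemma star_mul_self (A : SU2) : star (A : M2) * A = 1 := A.2.1.1

lemma det_coe (A : SU2) : (A : M2).det = 1 := A.2.2

lemma star_eq_adjugate (A : SU2) : star (A : M2) = (A : M2).adjugate := by
  rw [← Matrix.inv_eq_left_inv (star_mul_self A), Matrix.inv_def, det_coe, Ring.inverse_one,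
    one_smul]

lemma apply_one_zero (A : SU2) : (A : M2) 1 0 = -star ((A : M2) 0 1) := by
  have := congrFun (congrFun (star_eq_adjugate A) 0) 1
  simp only [Matrix.star_apply, Matrix.adjugate_fin_two] at this
  rw [← star_star ((A : M2) 1 0), this]
  simp

lemma apply_one_one (A : SU2) : (A : M2) 1 1 = star ((A : M2) 0 0) := by
  have := congrFun (congrFun (star_eq_adjugate A) 0) 0
  simp only [Matrix.star_apply, Matrix.adjugate_fin_two] at this
  simpa using this.symm

end SU2

lemma eq_diagSU_of_apply_one_zero (A : SU2) (h : (A : M2) 1 0 = 0) : ∃ x : ℝ, A = diagSU x := by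
  set α := (A : M2) 0 0
  have h01 : (A : M2) 0 1 = 0 := by
    simpa [h, eq_comm (a := (0 : ℂ))] using SU2.apply_one_zero A
  have hdet := SU2.det_coe A
  rw [Matrix.det_fin_two, h, mul_zero, sub_zero, SU2.apply_one_one, Complex.star_def,
    Complex.mul_conj'] at hdet
  have hnorm : ‖α‖ = 1 :=
    (pow_eq_one_iff_of_nonneg (norm_nonneg α) two_ne_zero).mp (by exact_mod_cast hdet)
  have hexp := Complex.norm_mul_exp_arg_mul_I α
  rw [hnorm, Complex.ofReal_one, one_mul] at hexp
  refine ⟨Complex.arg α, Subtype.ext ?_⟩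
  change (A : M2) = diagU _
  rw [Matrix.eta_fin_two (A : M2), SU2.apply_one_one, h, h01, diagU, ← star_exp_I, hexp]
  ext i j
  fin_cases i <;> fin_cases j <;> rfl

lemma cayleyKlein_mem_specialUnitaryGroup (a b : ℂ) (h : star a * a + star b * b = 1) :
    !![a, -star b; b, star a] ∈ Matrix.specialUnitaryGroup (Fin 2) ℂ := by
  rw [Complex.star_def] at h
  refine ⟨Matrix.mem_unitaryGroup_iff'.mpr ?_, ?_⟩
  · ext i j
    fin_cases i <;> fin_cases j <;>
      simp [Matrix.mul_apply, Matrix.star_apply] <;> first | ring1 | linear_combination h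
  · rw [SetLike.mem_coe, MonoidHom.mem_mker, Matrix.coe_detMonoidHom, Matrix.det_fin_two_of]
    simp only [Complex.star_def]
    linear_combination h

lemma exists_SU2_col_zero_eq_smul (v : Fin 2 → ℂ) (hv : v ≠ 0) :
    ∃ (W : SU2) (c : ℂ), (fun k => (W : M2) k 0) = c • v := by
  set r := Complex.normSq (v 0) + Complex.normSq (v 1)
  have hr : 0 < r := by
    obtain h0 | h1 : v 0 ≠ 0 ∨ v 1 ≠ 0 := by
      by_contra! h
      exact hv (funext fun k => by fin_cases k <;> simp [h.1, h.2])
    · exact add_pos_of_pos_of_nonneg (Complex.normSq_pos.mpr h0) (Complex.normSq_nonneg _)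
    · exact add_pos_of_nonneg_of_pos (Complex.normSq_nonneg _) (Complex.normSq_pos.mpr h1)
  set c : ℂ := (((Real.sqrt r)⁻¹ : ℝ) : ℂ)
  have hunit : star (c * v 0) * (c * v 0) + star (c * v 1) * (c * v 1) = 1 := by
    simp only [Complex.star_def, ← Complex.normSq_eq_conj_mul_self, Complex.normSq_mul,
      Complex.normSq_ofReal, c]
    have := Real.mul_self_sqrt hr.le
    norm_cast
    field_simp
    linarith
  refine ⟨⟨_, cayleyKlein_mem_specialUnitaryGroup _ _ hunit⟩, c, ?_⟩
  ext k
  fin_cases k <;> rfl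

lemma exists_eq_conj_diagSU_of_mulVec_eq_smul {A W : SU2} {a : ℂ}
    (h : (A : M2) *ᵥ (fun k => (W : M2) k 0) = a • fun k => (W : M2) k 0) :
    ∃ x : ℝ, A = W * diagSU x * W⁻¹ := by
  obtain ⟨x, hx⟩ := eq_diagSU_of_apply_one_zero (W⁻¹ * A * W)
    (Matrix.mul_mul_apply_eq_zero_of_mulVec_eq_smul (SU2.star_mul_self W) h one_ne_zero)
  exact ⟨x, by rw [← hx]; group⟩

lemma exists_eq_conj_diagSU_of_commute {A B : SU2} (h : Commute A B) :
    ∃ (W : SU2) (x y : ℝ), A = W * diagSU x * W⁻¹ ∧ B = W * diagSU y * W⁻¹ := by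
  obtain ⟨v, hv, a, b, hAv, hBv⟩ :=
    Matrix.exists_common_eigenvector (show Commute (A : M2) B from congrArg Subtype.val h.eq)
  obtain ⟨W, c, hW⟩ := exists_SU2_col_zero_eq_smul v hv
  obtain ⟨x, hx⟩ := exists_eq_conj_diagSU_of_mulVec_eq_smul (A := A) (W := W) (a := a)
    (by rw [hW, Matrix.mulVec_smul, hAv, smul_comm])
  obtain ⟨y, hy⟩ := exists_eq_conj_diagSU_of_mulVec_eq_smul (A := B) (W := W) (a := b)
    (by rw [hW, Matrix.mulVec_smul, hBv, smul_comm])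
  exact ⟨W, x, y, hx, hy⟩

lemma exists_neg_eq_add_of_sin_eq_zero {x : ℝ} (h : sin x = 0) : ∃ j : ℤ, -x = x + 2 * π * j := by
  obtain ⟨n, hn⟩ := Real.sin_eq_zero_iff.mp h
  exact ⟨-n, by rw [← hn]; push_cast; ring⟩

lemma cos_add_two_pi_mul_int (x : ℝ) (k : ℤ) : cos (x + 2 * π * k) = cos x := by
  rw [mul_comm, Real.cos_add_int_mul_two_pi]

lemma sin_add_two_pi_mul_int (x : ℝ) (k : ℤ) : sin (x + 2 * π * k) = sin x := by
  rw [mul_comm, Real.sin_add_int_mul_two_pi]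

lemma pillowSetoid_r_iff {p q : ℝ × ℝ} : pillowSetoid.r p q ↔
    cos p.1 = cos q.1 ∧ cos p.2 = cos q.2 ∧ sin p.1 * sin p.2 = sin q.1 * sin q.2 := by
  obtain ⟨x, y⟩ := p
  obtain ⟨x', y'⟩ := q
  constructor
  · rintro ⟨m, n, ⟨rfl, rfl⟩ | ⟨rfl, rfl⟩⟩ <;>
      simp [cos_add_two_pi_mul_int, sin_add_two_pi_mul_int]
  rintro ⟨h1, h2, h3⟩
  have sin_shift : ∀ (t : ℝ) (j : ℤ), sin (2 * j * π + t) = sin t := fun t j => by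
    rw [add_comm, mul_right_comm, sin_add_two_pi_mul_int]
  obtain ⟨k, hk | hk⟩ := Real.cos_eq_cos_iff.mp h1 <;>
    obtain ⟨l, hl | hl⟩ := Real.cos_eq_cos_iff.mp h2 <;> dsimp only at hk hl h3
  -- in the two mixed cases `sin x * sin y = 0`, and where a sine vanishes the sign is immaterial
  · exact ⟨k, l, Or.inl ⟨by rw [hk]; ring, by rw [hl]; ring⟩⟩
  · rw [hk, hl, sub_eq_add_neg, sin_shift, sin_shift, sin_neg] at h3
    rcases mul_eq_zero.mp (show sin x * sin y = 0 by linarith) with hx | hy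
    · obtain ⟨j, hj⟩ := exists_neg_eq_add_of_sin_eq_zero hx
      exact ⟨k - j, l, Or.inr ⟨by push_cast; linarith, by push_cast; linarith⟩⟩
    · obtain ⟨j, hj⟩ := exists_neg_eq_add_of_sin_eq_zero hy
      exact ⟨k, l + j, Or.inl ⟨by push_cast; linarith, by push_cast; linarith⟩⟩
  · rw [hk, hl, sub_eq_add_neg, sin_shift, sin_shift, sin_neg] at h3
    rcases mul_eq_zero.mp (show sin x * sin y = 0 by linarith) with hx | hy
    · obtain ⟨j, hj⟩ := exists_neg_eq_add_of_sin_eq_zero hx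
      exact ⟨k + j, l, Or.inl ⟨by push_cast; linarith, by push_cast; linarith⟩⟩
    · obtain ⟨j, hj⟩ := exists_neg_eq_add_of_sin_eq_zero hy
      exact ⟨k, l - j, Or.inr ⟨by push_cast; linarith, by push_cast; linarith⟩⟩
  · exact ⟨k, l, Or.inr ⟨by rw [hk]; ring, by rw [hl]; ring⟩⟩

lemma diagSU_add (s t : ℝ) : diagSU (s + t) = diagSU s * diagSU t :=
  Subtype.ext (diagU_mul s t).symm

def diagHom : Multiplicative ℝ →* SU2 where
  toFun t := diagSU t.toAdd
  map_one' := Subtype.ext diagU_zero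
  map_mul' _ _ := diagSU_add _ _

lemma diagSU_int_mul (m : ℤ) (t : ℝ) : diagSU (m * t) = diagSU t ^ m := by
  simpa [diagHom] using map_zpow diagHom (Multiplicative.ofAdd t) m

lemma diagSU_two_pi : diagSU (2 * π) = 1 := by
  refine Subtype.ext ?_
  change diagU _ = 1
  rw [diagU, ← Matrix.diagonal_one]
  congr 1
  ext i
  fin_cases i <;> simp [neg_mul, Complex.exp_neg, Complex.exp_two_pi_mul_I]

lemma diagSU_add_two_pi_mul_int (t : ℝ) (k : ℤ) : diagSU (t + 2 * π * k) = diagSU t := by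
  rw [diagSU_add, mul_comm, diagSU_int_mul, diagSU_two_pi, _root_.one_zpow, mul_one]

/-- The matrix `!![0, 1; -1, 0]`, written in the Cayley–Klein form `!![a, -star b; b, star a]`. -/
def weylSU : SU2 :=
  ⟨!![0, -star (-1); -1, star 0], cayleyKlein_mem_specialUnitaryGroup 0 (-1) (by norm_num)⟩

lemma weylSU_conj_diagSU (t : ℝ) : weylSU * diagSU t * weylSU⁻¹ = diagSU (-t) := by
  refine Subtype.ext ?_
  change (weylSU : M2) * diagU t * star (weylSU : M2) = diagU (-t)
  rw [Matrix.eta_fin_two (star (weylSU : M2))]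
  simp [weylSU, diagU, Matrix.diagonal_fin_two, Matrix.star_apply]

lemma trace_diagSU (t : ℝ) : Matrix.trace (diagSU t : M2) = ((2 * cos t : ℝ) : ℂ) := by
  change Matrix.trace (diagU t) = _
  rw [diagU, Matrix.trace_diagonal, Fin.sum_univ_two]
  push_cast
  exact (Complex.two_cos _).symm

lemma continuous_diagSU : Continuous diagSU := by
  refine Continuous.subtype_mk (continuous_matrix fun i j => ?_) _
  fin_cases i <;> fin_cases j <;> simp [diagU] <;> fun_prop

section Z2

variable {G H : Type*} [Group G] [Group H]

lemma zsqHom_generators (ρ : Z2 →* G) :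
    zsqHom (ρ (.ofAdd (1, 0))) (ρ (.ofAdd (0, 1))) ((Commute.all _ _).map ρ) = ρ := by
  refine MonoidHom.ext fun z => ?_
  change ρ _ ^ (Multiplicative.toAdd z).1 * ρ _ ^ (Multiplicative.toAdd z).2 = ρ z
  rw [← map_zpow ρ, ← map_zpow ρ, ← map_mul]
  congr 1
  apply Multiplicative.toAdd.injective
  simp

lemma comp_zsqHom (f : G →* H) {u v : G} (h : Commute u v) :
    f.comp (zsqHom u v h) = zsqHom (f u) (f v) (h.map f) := by
  ext z
  simp [zsqHom]

end Z2

lemma pillRep_apply (p : ℝ × ℝ) (z : Z2) :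
    pillRep p z = diagSU ((Multiplicative.toAdd z).1 * p.1 + (Multiplicative.toAdd z).2 * p.2) := by
  rw [diagSU_add, diagSU_int_mul, diagSU_int_mul]
  rfl

lemma continuous_pillRep : Continuous pillRep := by
  refine continuous_induced_rng.mpr (continuous_pi fun z => ?_)
  simp only [Function.comp_apply, pillRep_apply]
  exact continuous_diagSU.comp (by fun_prop)

lemma exists_pillRep_conj (ρ : Z2 →* SU2) : ∃ p, (conjSetoid Z2).r (pillRep p) ρ := by
  obtain ⟨W, x, y, hx, hy⟩ := exists_eq_conj_diagSU_of_commute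
    ((Commute.all (Multiplicative.ofAdd ((1 : ℤ), (0 : ℤ))) (.ofAdd (0, 1))).map ρ)
  have hρ : (MulAut.conj W).toMonoidHom.comp (pillRep (x, y)) = ρ := by
    rw [pillRep, comp_zsqHom]
    simp only [MulEquiv.coe_toMonoidHom, MulAut.conj_apply, ← hx, ← hy]
    exact zsqHom_generators ρ
  exact ⟨(x, y), W, fun g => by rw [← hρ]; rfl⟩

namespace CharVar

variable {G : Type*} [Group G]

def trace (g : G) : CharVar G → ℂ :=
  Quotient.lift (fun ρ : G →* SU2 => Matrix.trace (ρ g : M2)) fun ρ _ ⟨u, hu⟩ => by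
    rw [hu g]
    change _ = Matrix.trace ((u : M2) * (ρ g : M2) * star (u : M2))
    rw [Matrix.trace_mul_cycle, SU2.star_mul_self, Matrix.one_mul]

lemma trace_charCl (g : G) (ρ : G →* SU2) : trace g (charCl ρ) = Matrix.trace (ρ g : M2) := rfl

lemma continuous_trace (g : G) : Continuous (trace g) := by
  refine Continuous.quotient_lift (Continuous.matrix_trace ?_) _
  exact continuous_subtype_val.comp ((continuous_apply g).comp continuous_induced_dom)

end CharVar

lemma trace_charCl_pillRep (p : ℝ × ℝ) (z : Z2) : CharVar.trace z (charCl (pillRep p)) =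
    ((2 * cos ((Multiplicative.toAdd z).1 * p.1 + (Multiplicative.toAdd z).2 * p.2) : ℝ) : ℂ) := by
  rw [CharVar.trace_charCl, pillRep_apply, trace_diagSU]

lemma pillowSetoid_r_of_trace_eq {p q : ℝ × ℝ}
    (h : ∀ z, CharVar.trace z (charCl (pillRep p)) = CharVar.trace z (charCl (pillRep q))) :
    pillowSetoid.r p q := by
  have hcos (a b : ℤ) : cos (a * p.1 + b * p.2) = cos (a * q.1 + b * q.2) := by
    have := h (.ofAdd (a, b))
    simp only [trace_charCl_pillRep, toAdd_ofAdd, Complex.ofReal_inj] at this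
    linarith
  have h1 := hcos 1 0
  have h2 := hcos 0 1
  have h3 := hcos 1 1
  simp only [Int.cast_one, Int.cast_zero, one_mul, zero_mul, add_zero, zero_add, cos_add]
    at h1 h2 h3
  exact pillowSetoid_r_iff.mpr ⟨h1, h2, by rw [h1, h2] at h3; linarith⟩

lemma pillRep_conj_of_pillowSetoid_r {p q : ℝ × ℝ} (h : pillowSetoid.r p q) :
    (conjSetoid Z2).r (pillRep p) (pillRep q) := by
  obtain ⟨m, n, ⟨h1, h2⟩ | ⟨h1, h2⟩⟩ := h
  · refine ⟨1, fun z => ?_⟩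
    rw [pillRep_apply, pillRep_apply, h1, h2, one_mul, inv_one, mul_one]
    set a := (Multiplicative.toAdd z).1
    set b := (Multiplicative.toAdd z).2
    convert diagSU_add_two_pi_mul_int _ (a * m + b * n) using 2
    push_cast
    ring
  · refine ⟨weylSU, fun z => ?_⟩
    rw [pillRep_apply, pillRep_apply, h1, h2, weylSU_conj_diagSU]
    set a := (Multiplicative.toAdd z).1
    set b := (Multiplicative.toAdd z).2
    convert diagSU_add_two_pi_mul_int _ (a * m + b * n) using 2
    push_cast
    ring

lemma charCl_pillRep_eq_iff {p q : ℝ × ℝ} :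
    charCl (pillRep p) = charCl (pillRep q) ↔ pillowSetoid.r p q :=
  ⟨fun h => pillowSetoid_r_of_trace_eq fun z => by rw [h],
    fun h => Quotient.sound (pillRep_conj_of_pillowSetoid_r h)⟩

lemma surjective_charCl_pillRep : Function.Surjective fun p => charCl (pillRep p) := by
  rintro ⟨ρ⟩
  obtain ⟨p, hp⟩ := exists_pillRep_conj ρ
  exact ⟨p, Quotient.sound hp⟩

lemma continuous_charCl_pillRep : Continuous fun p => charCl (pillRep p) :=
  continuous_quotient_mk'.comp continuous_pillRep

instance : T2Space (CharVar Z2) := by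
  refine T2Space.of_injective_continuous (f := fun c z => CharVar.trace z c) ?_
    (continuous_pi CharVar.continuous_trace)
  intro c c' h
  obtain ⟨p, rfl⟩ := surjective_charCl_pillRep c
  obtain ⟨q, rfl⟩ := surjective_charCl_pillRep c'
  exact charCl_pillRep_eq_iff.mpr (pillowSetoid_r_of_trace_eq (congrFun h))

lemma exists_add_two_pi_mul_int_mem_Icc (x : ℝ) : ∃ k : ℤ, x + 2 * π * k ∈ Set.Icc 0 (2 * π) := by
  refine ⟨-toIcoDiv two_pi_pos 0 x, ?_⟩
  have h := toIcoMod_mem_Ico' two_pi_pos x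
  rw [← self_sub_toIcoDiv_zsmul, zsmul_eq_mul] at h
  push_cast
  constructor <;> linarith [h.1, h.2]

instance : CompactSpace (Quotient pillowSetoid) := by
  have himage : Quotient.mk pillowSetoid '' (Set.Icc 0 (2 * π) ×ˢ Set.Icc 0 (2 * π)) = .univ := by
    refine Set.eq_univ_of_forall fun c => Quotient.inductionOn c fun p => ?_
    obtain ⟨m, hm⟩ := exists_add_two_pi_mul_int_mem_Icc p.1
    obtain ⟨n, hn⟩ := exists_add_two_pi_mul_int_mem_Icc p.2
    exact ⟨(p.1 + 2 * π * m, p.2 + 2 * π * n), ⟨hm, hn⟩,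
      Quotient.sound (pillowSetoid.symm ⟨m, n, Or.inl ⟨rfl, rfl⟩⟩)⟩
  exact ⟨himage ▸ (isCompact_Icc.prod isCompact_Icc).image continuous_quotient_mk'⟩

lemma exists_cos_cos_sin_mul {A B C : ℝ} (hA : |A| ≤ 1) (hB : |B| ≤ 1)
    (hC : C ^ 2 = (1 - A ^ 2) * (1 - B ^ 2)) :
    ∃ x y, cos x = A ∧ cos y = B ∧ sin x * sin y = C := by
  obtain ⟨hA₁, hA₂⟩ := abs_le.mp hA
  obtain ⟨hB₁, hB₂⟩ := abs_le.mp hB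
  have hsin : sin (arccos A) * sin (arccos B) = |C| := by
    rw [sin_arccos, sin_arccos, ← sqrt_mul (by nlinarith), ← hC, sqrt_sq_eq_abs]
  rcases le_total 0 C with hC0 | hC0
  · refine ⟨arccos A, arccos B, cos_arccos hA₁ hA₂, cos_arccos hB₁ hB₂, ?_⟩
    rw [hsin, abs_of_nonneg hC0]
  · refine ⟨arccos A, -arccos B, cos_arccos hA₁ hA₂, by rw [cos_neg, cos_arccos hB₁ hB₂], ?_⟩
    rw [sin_neg, mul_neg, hsin, abs_of_nonpos hC0, neg_neg]

/-- The image is the "pillow surface" `c² = (1 - a²)(1 - b²)`, `|a|, |b| ≤ 1`, which every open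
ray from the origin meets exactly once. -/
def pillowPoint (p : ℝ × ℝ) : EuclideanSpace ℝ (Fin 3) := !₂[cos p.1, cos p.2, sin p.1 * sin p.2]

lemma pillowPoint_eq_iff {p q : ℝ × ℝ} : pillowPoint p = pillowPoint q ↔ pillowSetoid.r p q := by
  rw [pillowSetoid_r_iff]
  simp [pillowPoint]

lemma pillowPoint_ne_zero (p : ℝ × ℝ) : pillowPoint p ≠ 0 := by
  intro h
  obtain ⟨h1, h2, h3 | h3⟩ : cos p.1 = 0 ∧ cos p.2 = 0 ∧ (sin p.1 = 0 ∨ sin p.2 = 0) := by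
    simpa [pillowPoint] using congrArg (fun v => (v 0, v 1, v 2)) h
  · nlinarith [sin_sq_add_cos_sq p.1]
  · nlinarith [sin_sq_add_cos_sq p.2]

lemma eq_one_of_pillowPoint_eq_smul {p q : ℝ × ℝ} {μ : ℝ} (hμ : 0 < μ)
    (h : pillowPoint q = μ • pillowPoint p) : μ = 1 := by
  obtain ⟨h1, h2, h3⟩ : cos q.1 = μ * cos p.1 ∧ cos q.2 = μ * cos p.2 ∧
      sin q.1 * sin q.2 = μ * (sin p.1 * sin p.2) := by
    simpa [pillowPoint] using congrArg (fun v => (v 0, v 1, v 2)) h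
  have surface (r : ℝ × ℝ) : (sin r.1 * sin r.2) ^ 2 = (1 - cos r.1 ^ 2) * (1 - cos r.2 ^ 2) := by
    nlinarith [sin_sq_add_cos_sq r.1, sin_sq_add_cos_sq r.2]
  have hp := surface p
  have hq := surface q
  rw [h1, h2, h3] at hq
  -- the two surface equations differ by `(μ² - 1)(μ² cos² p.1 cos² p.2 - 1)`
  have hfactor : (μ ^ 2 - 1) * (μ ^ 2 * cos p.1 ^ 2 * cos p.2 ^ 2 - 1) = 0 := by
    linear_combination μ ^ 2 * hp - hq
  have hq1 : (μ * cos p.1) ^ 2 ≤ 1 := h1 ▸ cos_sq_le_one q.1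
  have hq2 : (μ * cos p.2) ^ 2 ≤ 1 := h2 ▸ cos_sq_le_one q.2
  have hsq : μ ^ 2 = 1 := by
    rcases mul_eq_zero.mp hfactor with h0 | h0
    · linarith
    · nlinarith [cos_sq_le_one p.1, cos_sq_le_one p.2]
  nlinarith

lemma exists_pos_smul_mem_pillowSurface {a b c : ℝ} (h : a ≠ 0 ∨ b ≠ 0 ∨ c ≠ 0) :
    ∃ t : ℝ, 0 < t ∧ |t * a| ≤ 1 ∧ |t * b| ≤ 1 ∧
      (t * c) ^ 2 = (1 - (t * a) ^ 2) * (1 - (t * b) ^ 2) := by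
  set M := max (max |a| |b|) |c|
  have hM : 0 < M := by
    rcases h with h | h | h <;> simp [M, abs_pos, h]
  have hbound : ∀ u, |u| ≤ M → ∀ t ∈ Set.Icc 0 M⁻¹, |t * u| ≤ 1 := by
    rintro u hu t ⟨ht0, htM⟩
    rw [abs_mul, abs_of_nonneg ht0]
    calc t * |u| ≤ M⁻¹ * M := mul_le_mul htM hu (abs_nonneg _) (by positivity)
      _ = 1 := inv_mul_cancel₀ hM.ne'
  have ha : |a| ≤ M := (le_max_left _ _).trans (le_max_left _ _)
  have hb : |b| ≤ M := (le_max_right _ _).trans (le_max_left _ _)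
  have hc : |c| ≤ M := le_max_right _ _
  set φ : ℝ → ℝ := fun t => (1 - (t * a) ^ 2) * (1 - (t * b) ^ 2) - (t * c) ^ 2
  have hφM : φ M⁻¹ ≤ 0 := by
    have hone : ∀ u, |u| = M → (M⁻¹ * u) ^ 2 = 1 := fun u h => by
      rw [mul_pow, ← sq_abs u, h, inv_pow, inv_mul_cancel₀ (pow_ne_zero _ hM.ne')]
    have hmax : (M⁻¹ * a) ^ 2 = 1 ∨ (M⁻¹ * b) ^ 2 = 1 ∨ (M⁻¹ * c) ^ 2 = 1 := by
      rcases max_choice (max |a| |b|) |c| with h | h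
      · rcases max_choice |a| |b| with h' | h'
        · exact Or.inl (hone a (by rw [← h', ← h]))
        · exact Or.inr (Or.inl (hone b (by rw [← h', ← h])))
      · exact Or.inr (Or.inr (hone c h.symm))
    have hM' : M⁻¹ ∈ Set.Icc 0 M⁻¹ := ⟨by positivity, le_rfl⟩
    have h0 := (sq_le_one_iff_abs_le_one _).mpr (hbound a ha _ hM')
    have h1 := (sq_le_one_iff_abs_le_one _).mpr (hbound b hb _ hM')
    have h2 := (sq_le_one_iff_abs_le_one _).mpr (hbound c hc _ hM')
    simp only [φ]
    rcases hmax with h | h | h <;> rw [h] <;> nlinarith [sq_nonneg (M⁻¹ * c)]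
  obtain ⟨t, ht, hφt⟩ := intermediate_value_Icc' (inv_nonneg.mpr hM.le)
    (by fun_prop : Continuous φ).continuousOn ⟨hφM, by simp [φ]⟩
  refine ⟨t, ht.1.lt_of_ne (by rintro rfl; simp [φ] at hφt), hbound a ha t ht, hbound b hb t ht, ?_⟩
  linear_combination -hφt

lemma exists_pillowPoint_eq_smul {w : EuclideanSpace ℝ (Fin 3)} (hw : w ≠ 0) :
    ∃ p, ∃ t : ℝ, 0 < t ∧ pillowPoint p = t • w := by
  obtain ⟨t, ht, ha, hb, hc⟩ := exists_pos_smul_mem_pillowSurface (a := w 0) (b := w 1) (c := w 2)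
    (by contrapose! hw; ext i; fin_cases i <;> simp [hw.1, hw.2.1, hw.2.2])
  obtain ⟨x, y, hx, hy, hxy⟩ := exists_cos_cos_sin_mul ha hb hc
  refine ⟨(x, y), t, ht, ?_⟩
  ext i
  fin_cases i <;> simp [pillowPoint, hx, hy, hxy]

lemma continuous_pillowPoint : Continuous pillowPoint := by
  unfold pillowPoint
  fun_prop

def pillowSphere (p : ℝ × ℝ) : Sphere2 :=
  ⟨NormedSpace.normalize (pillowPoint p), mem_sphere_zero_iff_norm.mpr
    (NormedSpace.norm_normalize_eq_one_iff.mpr (pillowPoint_ne_zero p))⟩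

lemma continuous_pillowSphere : Continuous pillowSphere :=
  ((continuous_norm.comp continuous_pillowPoint).inv₀ fun p => norm_ne_zero_iff.mpr
    (pillowPoint_ne_zero p)).smul continuous_pillowPoint |>.subtype_mk _

lemma pillowSphere_eq_iff {p q : ℝ × ℝ} : pillowSphere p = pillowSphere q ↔ pillowSetoid.r p q := by
  refine ⟨fun h => ?_, fun h =>
    Subtype.ext (congrArg NormedSpace.normalize (pillowPoint_eq_iff.mpr h))⟩
  have hpos (r : ℝ × ℝ) : 0 < ‖pillowPoint r‖ := norm_pos_iff.mpr (pillowPoint_ne_zero r)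
  have hq : pillowPoint q = (‖pillowPoint q‖ * ‖pillowPoint p‖⁻¹) • pillowPoint p :=
    calc pillowPoint q = ‖pillowPoint q‖ • NormedSpace.normalize (pillowPoint q) :=
          (NormedSpace.norm_smul_normalize _).symm
      _ = ‖pillowPoint q‖ • NormedSpace.normalize (pillowPoint p) := by
          rw [show NormedSpace.normalize (pillowPoint p) = _ from congrArg Subtype.val h]; rfl
      _ = _ := by rw [mul_smul]; rfl
  have hμ := eq_one_of_pillowPoint_eq_smul (mul_pos (hpos q) (inv_pos.mpr (hpos p))) hq
  rw [hμ, one_smul] at hq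
  exact pillowPoint_eq_iff.mp hq.symm

lemma surjective_pillowSphere : Function.Surjective pillowSphere := by
  rintro ⟨w, hw⟩
  have hw1 : ‖w‖ = 1 := mem_sphere_zero_iff_norm.mp hw
  obtain ⟨p, t, ht, hp⟩ :=
    exists_pillowPoint_eq_smul (ne_zero_of_norm_ne_zero (hw1.trans_ne one_ne_zero))
  refine ⟨p, Subtype.ext ?_⟩
  change NormedSpace.normalize _ = w
  rw [hp, NormedSpace.normalize_smul_of_pos ht, NormedSpace.normalize_eq_self_of_norm_eq_one hw1]

end CS

open CS in
/-- The pillowcase: the map `ℝ² → χ(ℤ²)`, `(x,y) ↦ [diag reps]`, is continuous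
and surjective, induces a homeomorphism from the quotient of the torus `ℝ²/(2πℤ)²` by the
involution `(x,y) ↦ (-x,-y)` onto `χ(ℤ²)`, and `χ(ℤ²)` is homeomorphic to the 2-sphere. -/
theorem pillowcase :
    Continuous (fun p : ℝ × ℝ => charCl (pillRep p)) ∧
    Function.Surjective (fun p : ℝ × ℝ => charCl (pillRep p)) ∧
    (∃ e : Quotient pillowSetoid ≃ₜ CharVar Z2,
      ∀ p : ℝ × ℝ, e (Quotient.mk pillowSetoid p) = charCl (pillRep p)) ∧
    Nonempty (CharVar Z2 ≃ₜ Sphere2) := by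
  obtain ⟨e, he⟩ := exists_homeomorph_quotient_of_ker continuous_charCl_pillRep
    surjective_charCl_pillRep fun _ _ => charCl_pillRep_eq_iff
  obtain ⟨f, -⟩ := exists_homeomorph_quotient_of_ker continuous_pillowSphere
    surjective_pillowSphere fun _ _ => pillowSphere_eq_iff
  exact ⟨continuous_charCl_pillRep, surjective_charCl_pillRep, ⟨e, he⟩, ⟨e.symm.trans f⟩⟩
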